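/- Let A be a set, let m, k, ℓ ≥ 1 be integers, and let t_0,…,t_{k+1} : A^{m+2} → A be operations satisfying the reversed Jónsson-type condition (B^⌣). Let α, β, γ be congruences with respect to the operations t_0,…,t_{k+1}. If ℓ is odd, then α ∩ (β ∘_{mℓ+1} γ) ⊆ (α ∩ γ) ∘_{kℓ+1} (α ∩ β); if ℓ is even, then α ∩ (β ∘_{mℓ+1} γ) ⊆ (α ∩ β) ∘_{kℓ+1} (α ∩ γ). -/

import Mathlib

/-!
Write the `β`-`γ` chain from `a` to `c` as `z 0 = a, z 1, …, z (mℓ+1) = c` and extend it by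
constants to all of `ℤ`. Cut it into `m` blocks of length `ℓ`. During the `i`-th sweep the `v`-th
argument of the operations runs through the `v`-th block, upwards or downwards according to the
parity of `v + i`, and the new chain applies `t (i+1)` to these arguments. Within a sweep,
consecutive terms differ by one step of `z` in every argument, all steps of the same parity, so
compatibility relates them. At the end of a sweep the arguments are, in consecutive pairs, one such
step apart, so they are related to the pair-identified arguments on which (B3) lets us pass from
`t i` to `t (i+1)`. (B1) and (B4) give the endpoints, and (B2) makes every term `α`-related to `a`,
as its first and last arguments are `a` and `c`.
-/

/-- Relational composition: `a (Comp R S) c` iff there is `b` with `a R b` and `b S c`. -/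
def Comp {A : Type*} (R S : A → A → Prop) : A → A → Prop :=
  fun a c => ∃ b, R a b ∧ S b c

/-- `AltComp R S m` is the alternating composition `R ∘ S ∘ R ∘ ⋯` with exactly `m` factors. -/
def AltComp {A : Type*} : (R S : A → A → Prop) → ℕ → A → A → Prop
  | _, _, 0 => Eq
  | R, _, 1 => R
  | R, S, (n+2) => Comp R (AltComp S R (n+1))

/-- Converse relation. -/
def Conv {A : Type*} (R : A → A → Prop) : A → A → Prop := fun a b => R b a

/-- Intersection of relations. -/
def InterRel {A : Type*} (R S : A → A → Prop) : A → A → Prop := fun a b => R a b ∧ S a b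

/-- `RelPow R n` is `R ∘ R ∘ ⋯ ∘ R` with `n` factors. -/
def RelPow {A : Type*} (R : A → A → Prop) : ℕ → A → A → Prop
  | 0 => Eq
  | 1 => R
  | n+2 => Comp R (RelPow R (n+1))

/-- Compatibility of a relation with a ternary operation. -/
def Compat3 {A : Type*} (f : A → A → A → A) (R : A → A → Prop) : Prop :=
  ∀ a a' b b' c c', R a a' → R b b' → R c c' → R (f a b c) (f a' b' c')

/-- Compatibility of a relation with an `n`-ary operation. -/
def CompatV {A : Type*} {n : ℕ} (f : (Fin n → A) → A) (R : A → A → Prop) : Prop :=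
  ∀ a b : Fin n → A, (∀ i, R (a i) (b i)) → R (f a) (f b)

/-- Composition `S 0 ∘ S 1 ∘ ⋯ ∘ S (n-1)` of a family of `n` relations. -/
def FamComp {A : Type*} : (n : ℕ) → (Fin n → A → A → Prop) → A → A → Prop
  | 0, _ => Eq
  | 1, S => S 0
  | n+2, S => Comp (S 0) (FamComp (n+1) (fun i => S i.succ))

/-- The substitution `x_0, x_0, x_2, x_2, x_4, x_4, …` (arguments identified in
consecutive pairs starting from the first two). -/
def EvenPair {A : Type*} (m : ℕ) (x : Fin (m+2) → A) : Fin (m+2) → A :=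
  fun j => x ⟨2 * (j.val / 2), by have := j.isLt; omega⟩

/-- The substitution `x_0, x_1, x_1, x_3, x_3, …` (arguments identified in
consecutive pairs starting from the second and third). -/
def OddPair {A : Type*} (m : ℕ) (x : Fin (m+2) → A) : Fin (m+2) → A :=
  fun j => x ⟨2 * ((j.val + 1) / 2) - 1, by have := j.isLt; omega⟩

section AltRel

variable {A : Type*}

def altRel (R S : A → A → Prop) (x : ℤ) : A → A → Prop := if Even x then R else S

theorem altRel_of_even_iff {R S : A → A → Prop} {x y : ℤ} (h : Even x ↔ Even y) :
    altRel R S x = altRel R S y := by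
  simp only [altRel, h]

theorem altRel_add_one (R S : A → A → Prop) (x : ℤ) : altRel R S (x + 1) = altRel S R x := by
  by_cases h : Even x <;> simp [altRel, h]

theorem altRel_add_even (R S : A → A → Prop) {x y : ℤ} (hy : Even y) :
    altRel R S (x + y) = altRel R S x :=
  altRel_of_even_iff (by simp [Int.even_add, hy])

theorem altRel_add_odd (R S : A → A → Prop) {x y : ℤ} (hy : Odd y) :
    altRel R S (x + y) = altRel S R x := by
  obtain ⟨r, rfl⟩ := hy
  rw [← add_assoc, altRel_add_one, altRel_add_even _ _ (even_two_mul r)]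

theorem interRel_altRel (P R S : A → A → Prop) (x : ℤ) :
    InterRel P (altRel R S x) = altRel (InterRel P R) (InterRel P S) x := by
  unfold altRel; split_ifs <;> rfl

theorem Equivalence.altRel {R S : A → A → Prop} (hR : Equivalence R) (hS : Equivalence S)
    (x : ℤ) : Equivalence (altRel R S x) := by
  unfold _root_.altRel; split_ifs <;> assumption

theorem CompatV.altRel {n : ℕ} {f : (Fin n → A) → A} {R S : A → A → Prop} (hR : CompatV f R)
    (hS : CompatV f S) (x : ℤ) : CompatV f (altRel R S x) := by
  unfold _root_.altRel; split_ifs <;> assumption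

end AltRel

section Chains

variable {A : Type*} {R S : A → A → Prop}

theorem altComp_succ_iff {n : ℕ} {a c : A} :
    AltComp R S (n + 1) a c ↔ ∃ b, R a b ∧ AltComp S R n b c := by
  cases n with
  | zero => simp [AltComp]
  | succ n => rfl

theorem altComp_iff_exists_chain {n : ℕ} {a c : A} :
    AltComp R S n a c ↔
      ∃ w : ℕ → A, w 0 = a ∧ w n = c ∧ ∀ j < n, altRel R S j (w j) (w (j + 1)) := by
  induction n generalizing R S a with
  | zero => exact ⟨fun h => ⟨fun _ => a, rfl, h, by simp⟩, fun ⟨w, h0, hn, _⟩ => h0 ▸ hn⟩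
  | succ n ih =>
    rw [altComp_succ_iff]
    constructor
    · rintro ⟨b, hab, hbc⟩
      obtain ⟨w, rfl, rfl, hw⟩ := ih.mp hbc
      refine ⟨fun | 0 => a | j + 1 => w j, rfl, rfl, fun j hj => ?_⟩
      cases j with
      | zero => simpa [altRel] using hab
      | succ j => simpa [altRel_add_one] using hw j (by omega)
    · rintro ⟨w, rfl, rfl, hw⟩
      refine ⟨w 1, by simpa [altRel] using hw 0 (by omega), ih.mpr ⟨fun j => w (j + 1), rfl, rfl,
        fun j hj => ?_⟩⟩
      simpa [altRel_add_one] using hw (j + 1) (by omega)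

theorem exists_int_chain_of_altComp (hR : Equivalence R) (hS : Equivalence S) {n : ℕ} {a c : A}
    (h : AltComp R S n a c) :
    ∃ z : ℤ → A, (∀ x ≤ 0, z x = a) ∧ (∀ x : ℤ, n ≤ x → z x = c) ∧
      ∀ x, altRel R S x (z x) (z (x + 1)) := by
  obtain ⟨w, hw0, hwn, hw⟩ := altComp_iff_exists_chain.mp h
  refine ⟨fun x => w (min x.toNat n), fun x hx => ?_, fun x hx => ?_, fun x => ?_⟩
  · simp [Int.toNat_of_nonpos hx, hw0]
  · simp [show n ≤ x.toNat by omega, hwn]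
  · rcases lt_or_ge x 0 with hx | hx
    · simpa [Int.toNat_of_nonpos hx.le, Int.toNat_of_nonpos (show x + 1 ≤ 0 by omega)] using
        (hR.altRel hS x).refl _
    rcases lt_or_ge x n with hxn | hxn
    · obtain ⟨j, rfl⟩ := Int.eq_ofNat_of_zero_le hx
      simpa [show j ≤ n by omega, show j + 1 ≤ n by omega] using hw j (by omega)
    · simpa [show n ≤ x.toNat by omega, show n ≤ (x + 1).toNat by omega] using
        (hR.altRel hS x).refl _

end Chains

section Operations

variable {A : Type*} {n : ℕ}

theorem CompatV.rel_apply_head {f : (Fin (n + 2) → A) → A} {α : A → A → Prop}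
    (hf : ∀ x, x (Fin.last (n + 1)) = x 0 → f x = x 0) (hα : Equivalence α) (hfα : CompatV f α)
    {x : Fin (n + 2) → A} (hx : α (x 0) (x (Fin.last (n + 1)))) : α (f x) (x 0) := by
  have hne : (0 : Fin (n + 2)) ≠ Fin.last (n + 1) := Fin.last_pos.ne
  set y := Function.update x (Fin.last (n + 1)) (x 0)
  have hy : f y = x 0 := by
    rw [hf y (by simp [y, hne])]
    simp [y, hne]
  refine hy ▸ hfα x y fun q => ?_
  by_cases hq : q = Fin.last (n + 1)
  · subst hq; simpa [y] using hα.symm hx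
  · simpa [y, hq] using hα.refl (x q)

theorem CompatV.rel_of_apply_eq {f g : (Fin n → A) → A} {δ : A → A → Prop} (hδ : Equivalence δ)
    (hf : CompatV f δ) (hg : CompatV g δ) {x y : Fin n → A} (hxy : ∀ q, δ (x q) (y q))
    (hfg : f y = g y) : δ (f x) (g x) :=
  hδ.trans (hf x y hxy) (hfg ▸ hg y x fun q => hδ.symm (hxy q))

end Operations

section Zigzag

variable {A : Type*}

/-- At stage `(i, s)` the `v`-th argument sits at `argIndex ℓ i s v` on the chain: inside the
block `(v-1)ℓ+1, …, vℓ`, moving up with `s` when `v + i` is even and down otherwise. The outer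
arguments `v = 0, m + 1` stay where the extended chain is constantly `a`, resp. `c`. -/
def argIndex (ℓ i s v : ℕ) : ℤ :=
  if Even (v + i) then ((v : ℤ) - 1) * ℓ + 1 + s else v * ℓ - s

theorem argIndex_zero_nonpos {ℓ i s : ℕ} (hs : s < ℓ) : argIndex ℓ i s 0 ≤ 0 := by
  unfold argIndex; split_ifs <;> push_cast <;> linarith

theorem le_argIndex_succ {ℓ i s : ℕ} (hs : s < ℓ) (m : ℕ) :
    (m : ℤ) * ℓ + 1 ≤ argIndex ℓ i s (m + 1) := by
  have : (s : ℤ) + 1 ≤ ℓ := by exact_mod_cast hs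
  unfold argIndex; split_ifs <;> push_cast <;> nlinarith

theorem argIndex_succ_zero {ℓ i s : ℕ} (hs : s + 1 = ℓ) (v : ℕ) :
    argIndex ℓ (i + 1) 0 v = argIndex ℓ i s v := by
  subst hs
  have hpar : Even (v + (i + 1)) ↔ ¬ Even (v + i) := by rw [← add_assoc, Nat.even_add_one]
  by_cases h : Even (v + i)
  · rw [argIndex, argIndex, if_neg (by rwa [hpar, not_not]), if_pos h]; push_cast; ring
  · rw [argIndex, argIndex, if_pos (hpar.mpr h), if_neg h]; push_cast; ring

theorem argIndex_succ_right_of_even {ℓ i s v : ℕ} (h : Even (v + i)) :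
    argIndex ℓ i (s + 1) v = argIndex ℓ i s v + 1 := by
  rw [argIndex, argIndex, if_pos h, if_pos h]; push_cast; ring

theorem argIndex_succ_right_of_not_even {ℓ i s v : ℕ} (h : ¬ Even (v + i)) :
    argIndex ℓ i s v = argIndex ℓ i (s + 1) v + 1 := by
  rw [argIndex, argIndex, if_neg h, if_neg h]; push_cast; ring

theorem argIndex_zero_succ_of_not_even {ℓ i v : ℕ} (h : ¬ Even (v + i)) :
    argIndex ℓ i 0 (v + 1) = argIndex ℓ i 0 v + 1 := by
  simp [argIndex, add_right_comm v 1 i, Nat.even_add_one, h]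

theorem even_argIndex_iff {ℓ i s v : ℕ} :
    Even (argIndex ℓ i s v) ↔ (Even (v + i) ↔ ¬ Even ((i + 1) * ℓ + s)) := by
  unfold argIndex
  split_ifs with h <;>
    simp only [Nat.even_add, Nat.even_mul, Nat.even_add_one, Int.even_add, Int.even_sub,
      Int.even_mul, Int.even_coe_nat, even_add_one, Int.odd_mul, odd_sub_one, Int.odd_coe_nat,
      ← Nat.not_even_iff_odd] at h ⊢ <;> tauto

variable (m ℓ : ℕ) (z : ℤ → A)

def argVec (i s : ℕ) : Fin (m + 2) → A := fun v => z (argIndex ℓ i s v)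

variable {m ℓ z}

theorem argVec_zero {a : A} (hza : ∀ x ≤ 0, z x = a) {i s : ℕ} (hs : s < ℓ) :
    argVec m ℓ z i s 0 = a :=
  hza _ (argIndex_zero_nonpos hs)

theorem argVec_last {c : A} (hzc : ∀ x : ℤ, (m * ℓ + 1 : ℕ) ≤ x → z x = c) {i s : ℕ} (hs : s < ℓ) :
    argVec m ℓ z i s (Fin.last (m + 1)) = c :=
  hzc _ (by push_cast; exact le_argIndex_succ hs m)

theorem argVec_succ_zero {i s : ℕ} (hs : s + 1 = ℓ) : argVec m ℓ z (i + 1) 0 = argVec m ℓ z i s :=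
  funext fun v => congrArg z (argIndex_succ_zero hs v)

variable {β γ : A → A → Prop}

theorem altRel_of_chain (hz : ∀ x, altRel β γ x (z x) (z (x + 1))) {x n : ℤ}
    (h : Even x ↔ Even n) : altRel β γ n (z x) (z (x + 1)) :=
  altRel_of_even_iff h ▸ hz x

theorem altRel_argVec_succ (hβ : Equivalence β) (hγ : Equivalence γ)
    (hz : ∀ x, altRel β γ x (z x) (z (x + 1))) (i s : ℕ) (v : Fin (m + 2)) :
    altRel β γ ((i + 1) * ℓ + s + 1 : ℕ) (argVec m ℓ z i s v) (argVec m ℓ z i (s + 1) v) := by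
  simp only [argVec]
  by_cases h : Even (v + i)
  · rw [argIndex_succ_right_of_even h]
    exact altRel_of_chain hz
      (by rw [even_argIndex_iff, Int.even_coe_nat]; simp [h, Nat.even_add_one])
  · rw [argIndex_succ_right_of_not_even h]
    exact (hβ.altRel hγ _).symm
      (altRel_of_chain hz (by rw [even_argIndex_iff, Int.even_coe_nat]; simp [h, add_assoc]))

theorem altRel_argIndex_pair (hβ : Equivalence β) (hγ : Equivalence γ)
    (hz : ∀ x, altRel β γ x (z x) (z (x + 1))) {i v p : ℕ} (h : p = v ∨ p + 1 = v ∧ Even (v + i)) :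
    altRel β γ ((i + 1) * ℓ : ℕ) (z (argIndex ℓ i 0 v)) (z (argIndex ℓ i 0 p)) := by
  rcases h with rfl | ⟨rfl, h⟩
  · exact (hβ.altRel hγ _).refl _
  · have hp : ¬ Even (p + i) := by rwa [add_right_comm, Nat.even_add_one] at h
    rw [argIndex_zero_succ_of_not_even hp]
    exact (hβ.altRel hγ _).symm
      (altRel_of_chain hz (by rw [even_argIndex_iff, Int.even_coe_nat]; simp [hp]))

theorem altRel_argVec_evenPair (hβ : Equivalence β) (hγ : Equivalence γ)
    (hz : ∀ x, altRel β γ x (z x) (z (x + 1))) {i : ℕ} (hi : Odd i) (q : Fin (m + 2)) :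
    altRel β γ ((i + 1) * ℓ : ℕ) (argVec m ℓ z i 0 q) (EvenPair m (argVec m ℓ z i 0) q) := by
  obtain ⟨r, rfl⟩ := hi
  exact altRel_argIndex_pair hβ hγ hz (by simp only [Nat.even_iff]; omega)

theorem altRel_argVec_oddPair (hβ : Equivalence β) (hγ : Equivalence γ)
    (hz : ∀ x, altRel β γ x (z x) (z (x + 1))) {i : ℕ} (hi : Even i) (q : Fin (m + 2)) :
    altRel β γ ((i + 1) * ℓ : ℕ) (argVec m ℓ z i 0 q) (OddPair m (argVec m ℓ z i 0) q) := by
  obtain ⟨r, rfl⟩ := hi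
  exact altRel_argIndex_pair hβ hγ hz (by simp only [Nat.even_iff]; omega)

end Zigzag

/-- Condition `(B^⌣)` for operations indexed by `ℕ`; only `t 0, …, t (k + 1)` matter. -/
structure IsReversedJonsson {A : Type*} (m k : ℕ) (t : ℕ → (Fin (m + 2) → A) → A) : Prop where
  apply_zero : ∀ x, t 0 x = x 0
  apply_of_last_eq : ∀ i x, x (Fin.last (m + 1)) = x 0 → t i x = x 0
  evenPair : ∀ i ≤ k, Odd i → ∀ x, t i (EvenPair m x) = t (i + 1) (EvenPair m x)
  oddPair : ∀ i ≤ k, Even i → ∀ x, t i (OddPair m x) = t (i + 1) (OddPair m x)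
  apply_last : ∀ x, t (k + 1) x = x (Fin.last (m + 1))

section Construction

variable {A : Type*} {m k ℓ : ℕ} {t : ℕ → (Fin (m + 2) → A) → A} {z : ℤ → A}
  {β γ : A → A → Prop}

theorem IsReversedJonsson.altRel_apply_succ (ht : IsReversedJonsson m k t) (hβ : Equivalence β)
    (hγ : Equivalence γ) (htβ : ∀ i, CompatV (t i) β) (htγ : ∀ i, CompatV (t i) γ)
    (hz : ∀ x, altRel β γ x (z x) (z (x + 1))) {i : ℕ} (hi : i ≤ k) :
    altRel β γ ((i + 1) * ℓ : ℕ) (t i (argVec m ℓ z i 0)) (t (i + 1) (argVec m ℓ z i 0)) := by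
  have hδ := hβ.altRel hγ ((i + 1) * ℓ : ℕ)
  have htδ (j : ℕ) := (htβ j).altRel (htγ j) ((i + 1) * ℓ : ℕ)
  rcases Nat.even_or_odd i with hi' | hi'
  · exact CompatV.rel_of_apply_eq hδ (htδ _) (htδ _) (altRel_argVec_oddPair hβ hγ hz hi')
      (ht.oddPair i hi hi' _)
  · exact CompatV.rel_of_apply_eq hδ (htδ _) (htδ _) (altRel_argVec_evenPair hβ hγ hz hi')
      (ht.evenPair i hi hi' _)

variable (m ℓ t z) in
def zigzagChain : ℕ → A
  | 0 => t 0 (argVec m ℓ z 0 0)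
  | u + 1 => t (u / ℓ + 1) (argVec m ℓ z (u / ℓ) (u % ℓ))

theorem zigzagChain_succ {i s : ℕ} (hs : s < ℓ) :
    zigzagChain m ℓ t z (ℓ * i + s + 1) = t (i + 1) (argVec m ℓ z i s) := by
  have hℓ : 0 < ℓ := by omega
  simp [zigzagChain, Nat.mul_add_div hℓ, Nat.div_eq_of_lt hs, Nat.mod_eq_of_lt hs]

theorem zigzagChain_mul (hℓ : 0 < ℓ) (i : ℕ) :
    zigzagChain m ℓ t z (ℓ * i) = t i (argVec m ℓ z i 0) := by
  cases i with
  | zero => simp [zigzagChain]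
  | succ i =>
    rw [show ℓ * (i + 1) = ℓ * i + (ℓ - 1) + 1 by rw [Nat.mul_succ]; omega,
      zigzagChain_succ (by omega), argVec_succ_zero (s := ℓ - 1) (by omega)]

theorem IsReversedJonsson.altRel_zigzagChain (ht : IsReversedJonsson m k t) (hβ : Equivalence β)
    (hγ : Equivalence γ) (htβ : ∀ i, CompatV (t i) β) (htγ : ∀ i, CompatV (t i) γ)
    (hz : ∀ x, altRel β γ x (z x) (z (x + 1))) (hℓ : 0 < ℓ) {j : ℕ} (hj : j < k * ℓ + 1) :
    altRel β γ (j + ℓ : ℕ) (zigzagChain m ℓ t z j) (zigzagChain m ℓ t z (j + 1)) := by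
  obtain ⟨i, s, hs, rfl⟩ : ∃ i s, s < ℓ ∧ j = ℓ * i + s :=
    ⟨j / ℓ, j % ℓ, Nat.mod_lt j hℓ, (Nat.div_add_mod j ℓ).symm⟩
  cases s with
  | zero =>
    have hi : i ≤ k := by nlinarith
    rw [add_zero, zigzagChain_mul hℓ, zigzagChain_succ (s := 0) hℓ]
    convert ht.altRel_apply_succ hβ hγ htβ htγ hz hi using 2
    ring
  | succ s =>
    rw [zigzagChain_succ hs, show ℓ * i + (s + 1) = ℓ * i + s + 1 by ring,
      zigzagChain_succ (by omega)]
    convert (htβ (i + 1)).altRel (htγ (i + 1)) _ _ _ (altRel_argVec_succ hβ hγ hz i s) using 2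
    ring

variable {a c : A}

theorem IsReversedJonsson.zigzagChain_rel {α : A → A → Prop} (ht : IsReversedJonsson m k t)
    (hα : Equivalence α) (htα : ∀ i, CompatV (t i) α) (hza : ∀ x ≤ 0, z x = a)
    (hzc : ∀ x : ℤ, (m * ℓ + 1 : ℕ) ≤ x → z x = c) (hac : α a c) (hℓ : 0 < ℓ) (u : ℕ) :
    α (zigzagChain m ℓ t z u) a := by
  have key (n i s : ℕ) (hs : s < ℓ) : α (t n (argVec m ℓ z i s)) a := by
    rw [← argVec_zero hza hs]
    exact (htα n).rel_apply_head (ht.apply_of_last_eq n) hα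
      (by rwa [argVec_zero hza hs, argVec_last hzc hs])
  cases u with
  | zero => exact key 0 0 0 hℓ
  | succ u => exact key _ _ _ (Nat.mod_lt u hℓ)

theorem IsReversedJonsson.zigzagChain_zero (ht : IsReversedJonsson m k t)
    (hza : ∀ x ≤ 0, z x = a) (hℓ : 0 < ℓ) : zigzagChain m ℓ t z 0 = a := by
  rw [zigzagChain, ht.apply_zero, argVec_zero hza hℓ]

theorem IsReversedJonsson.zigzagChain_last (ht : IsReversedJonsson m k t)
    (hzc : ∀ x : ℤ, (m * ℓ + 1 : ℕ) ≤ x → z x = c) (hℓ : 0 < ℓ) :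
    zigzagChain m ℓ t z (k * ℓ + 1) = c := by
  have h := zigzagChain_succ (m := m) (t := t) (z := z) (i := k) hℓ
  rw [add_zero, mul_comm] at h
  rw [h, ht.apply_last, argVec_last hzc hℓ]

theorem IsReversedJonsson.exists_chain {α : A → A → Prop} (ht : IsReversedJonsson m k t)
    (hℓ : 0 < ℓ) (hα : Equivalence α) (hβ : Equivalence β) (hγ : Equivalence γ)
    (htα : ∀ i, CompatV (t i) α) (htβ : ∀ i, CompatV (t i) β) (htγ : ∀ i, CompatV (t i) γ)
    (hac : α a c) (hbc : AltComp β γ (m * ℓ + 1) a c) :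
    ∃ p : ℕ → A, p 0 = a ∧ p (k * ℓ + 1) = c ∧
      ∀ j < k * ℓ + 1, InterRel α (altRel β γ (j + ℓ : ℕ)) (p j) (p (j + 1)) := by
  obtain ⟨z, hza, hzc, hz⟩ := exists_int_chain_of_altComp hβ hγ hbc
  have hrel := ht.zigzagChain_rel hα htα hza hzc hac hℓ
  exact ⟨zigzagChain m ℓ t z, ht.zigzagChain_zero hza hℓ, ht.zigzagChain_last hzc hℓ,
    fun j hj => ⟨hα.trans (hrel j) (hα.symm (hrel (j + 1))),
      ht.altRel_zigzagChain hβ hγ htβ htγ hz hℓ hj⟩⟩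

end Construction

open Fin.NatCast in
/-- The cast `ℕ → Fin (k + 2)` wraps around beyond `k + 1`, which only `apply_of_last_eq` sees. -/
theorem IsReversedJonsson.of_fin {A : Type*} {m k : ℕ} {t : Fin (k + 2) → (Fin (m + 2) → A) → A}
    (hB1 : ∀ x : Fin (m+2) → A, t 0 x = x 0)
    (hB2 : ∀ (i : Fin (k+2)) (x : Fin (m+2) → A), x (Fin.last (m+1)) = x 0 → t i x = x 0)
    (hB3odd : ∀ (i : ℕ) (hi : i ≤ k), i % 2 = 1 →
      ∀ x : Fin (m+2) → A, t ⟨i, by omega⟩ (EvenPair m x) = t ⟨i+1, by omega⟩ (EvenPair m x))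
    (hB3even : ∀ (i : ℕ) (hi : i ≤ k), i % 2 = 0 →
      ∀ x : Fin (m+2) → A, t ⟨i, by omega⟩ (OddPair m x) = t ⟨i+1, by omega⟩ (OddPair m x))
    (hB4 : ∀ x : Fin (m+2) → A, t (Fin.last (k+1)) x = x (Fin.last (m+1))) :
    IsReversedJonsson m k fun i : ℕ => t i where
  apply_zero := by simpa using hB1
  apply_of_last_eq i := hB2 i
  evenPair i hi hodd := by
    rw [Fin.natCast_eq_mk (by omega : i < k + 2), Fin.natCast_eq_mk (by omega : i + 1 < k + 2)]
    exact hB3odd i hi (Nat.odd_iff.mp hodd)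
  oddPair i hi heven := by
    rw [Fin.natCast_eq_mk (by omega : i < k + 2), Fin.natCast_eq_mk (by omega : i + 1 < k + 2)]
    exact hB3even i hi (Nat.even_iff.mp heven)
  apply_last x := by simpa only [Fin.natCast_eq_last] using hB4 x

theorem stmt17 {A : Type*} (m k ℓ : ℕ) (hℓ : 1 ≤ ℓ)
    (t : Fin (k+2) → (Fin (m+2) → A) → A)
    (hB1 : ∀ x : Fin (m+2) → A, t 0 x = x 0)
    (hB2 : ∀ (i : Fin (k+2)) (x : Fin (m+2) → A), x (Fin.last (m+1)) = x 0 → t i x = x 0)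
    (hB3odd : ∀ (i : ℕ) (hi : i ≤ k), i % 2 = 1 →
      ∀ x : Fin (m+2) → A, t ⟨i, by omega⟩ (EvenPair m x) = t ⟨i+1, by omega⟩ (EvenPair m x))
    (hB3even : ∀ (i : ℕ) (hi : i ≤ k), i % 2 = 0 →
      ∀ x : Fin (m+2) → A, t ⟨i, by omega⟩ (OddPair m x) = t ⟨i+1, by omega⟩ (OddPair m x))
    (hB4 : ∀ x : Fin (m+2) → A, t (Fin.last (k+1)) x = x (Fin.last (m+1)))
    (α β γ : A → A → Prop)
    (hα : Equivalence α) (hαcompat : ∀ i, CompatV (t i) α)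
    (hβ : Equivalence β) (hβcompat : ∀ i, CompatV (t i) β)
    (hγ : Equivalence γ) (hγcompat : ∀ i, CompatV (t i) γ) :
    (Odd ℓ → ∀ a c, InterRel α (AltComp β γ (m * ℓ + 1)) a c →
      AltComp (InterRel α γ) (InterRel α β) (k * ℓ + 1) a c) ∧
    (Even ℓ → ∀ a c, InterRel α (AltComp β γ (m * ℓ + 1)) a c →
      AltComp (InterRel α β) (InterRel α γ) (k * ℓ + 1) a c) := by
  have ht := IsReversedJonsson.of_fin hB1 hB2 hB3odd hB3even hB4
  have hchain {a c : A} (h : InterRel α (AltComp β γ (m * ℓ + 1)) a c) :=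
    ht.exists_chain hℓ hα hβ hγ (fun _ => hαcompat _) (fun _ => hβcompat _) (fun _ => hγcompat _)
      h.1 h.2
  refine ⟨fun hodd a c h => ?_, fun heven a c h => ?_⟩
  all_goals
    obtain ⟨p, hp0, hpn, hp⟩ := hchain h
    refine altComp_iff_exists_chain.mpr ⟨p, hp0, hpn, fun j hj => ?_⟩
    have hpj := hp j hj
    rw [interRel_altRel, Nat.cast_add] at hpj
  · rwa [altRel_add_odd _ _ ((Int.odd_coe_nat ℓ).mpr hodd)] at hpj
  · rwa [altRel_add_even _ _ ((Int.even_coe_nat ℓ).mpr heven)] at hpj
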